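/- Tweedie's identity: if Y = X + √t·N with N ∼ N(0, Id) independent of X, and p_t denotes the density of Y, then E[X | Y = y] = y + t·∇ log p_t(y). -/

import Mathlib

/-!
Differentiating `p_t(y) = ∫ φ_t(y - x) dμ(x)` under the integral sign, with
`∇φ_t(u) = -t⁻¹ u φ_t(u)`, gives `t ∇p_t(y) = ∫ φ_t(y - x) (x - y) dμ(x)`; dividing by
`p_t(y) > 0` is the identity. The domination comes from Gaussian decay: `r exp(-r² / 2t) ≤ 1 + 2t`
bounds the integrand of the gradient uniformly in `x` and `y`.
-/

open MeasureTheory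

/-- Multivariate Gaussian density `G(μ,Σ)(x)` on Euclidean space `ℝ^d`. -/
noncomputable def gaussE {d : ℕ} (μ : EuclideanSpace ℝ (Fin d))
    (S : Matrix (Fin d) (Fin d) ℝ) (x : EuclideanSpace ℝ (Fin d)) : ℝ :=
  ((2 * Real.pi) ^ d * S.det) ^ (-(1:ℝ)/2) *
    Real.exp (-(1/2) * dotProduct (fun i => x i - μ i)
      (S⁻¹.mulVec (fun i => x i - μ i)))

open Real InnerProductSpace

theorem HasGradientAt.log {F : Type*} [NormedAddCommGroup F] [InnerProductSpace ℝ F]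
    [CompleteSpace F] {f : F → ℝ} {f' x : F} (hf : HasGradientAt f f' x) (hx : f x ≠ 0) :
    HasGradientAt (fun y => log (f y)) ((f x)⁻¹ • f') x := by
  rw [hasGradientAt_iff_hasFDerivAt, map_smul]
  exact hf.hasFDerivAt.log hx

namespace Tweedie

variable {E : Type*} [NormedAddCommGroup E]

-- With `c = (2πt)^(-d/2)` this is the density of `𝒩(x, t • Id)` at `z`; Tweedie's identity
-- does not see the normalising constant.
noncomputable def gaussKernel (c t : ℝ) (x z : E) : ℝ :=
  c * exp (-(2 * t)⁻¹ * ‖z - x‖ ^ 2)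

lemma mul_exp_neg_inv_mul_sq_le {t : ℝ} (ht : 0 < t) (r : ℝ) :
    r * exp (-(2 * t)⁻¹ * r ^ 2) ≤ 1 + 2 * t := by
  set e := exp (-(2 * t)⁻¹ * r ^ 2)
  have he : 0 < e := exp_pos _
  have he1 : e ≤ 1 := exp_le_one_iff.2 (by rw [neg_mul]; exact neg_nonpos.2 (by positivity))
  -- `s + 1 ≤ exp s` at `s = r² / 2t`, multiplied by `e = exp (-s)`
  have hsq : r ^ 2 * e ≤ 2 * t := by
    have h := add_one_le_exp ((2 * t)⁻¹ * r ^ 2)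
    have hinv : exp ((2 * t)⁻¹ * r ^ 2) * e = 1 := by
      rw [← exp_add, neg_mul, add_neg_cancel, exp_zero]
    have : (2 * t)⁻¹ * (r ^ 2 * e) ≤ 1 := by nlinarith
    rwa [inv_mul_le_iff₀ (by positivity), mul_one] at this
  nlinarith [sq_nonneg (r - 1)]

lemma gaussKernel_pos {c : ℝ} (hc : 0 < c) (t : ℝ) (x z : E) : 0 < gaussKernel c t x z :=
  mul_pos hc (exp_pos _)

lemma abs_gaussKernel_le (c : ℝ) {t : ℝ} (ht : 0 < t) (x z : E) :
    |gaussKernel c t x z| ≤ |c| := by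
  rw [gaussKernel, abs_mul, abs_exp]
  refine mul_le_of_le_one_right (abs_nonneg c) (exp_le_one_iff.2 ?_)
  rw [neg_mul]
  exact neg_nonpos.2 (by positivity)

lemma continuous_gaussKernel (c t : ℝ) (z : E) : Continuous (gaussKernel c t · z) := by
  unfold gaussKernel; fun_prop

lemma norm_gaussKernel_smul_sub_le [NormedSpace ℝ E] (c : ℝ) {t : ℝ} (ht : 0 < t) (x z : E) :
    ‖gaussKernel c t x z • (z - x)‖ ≤ |c| * (1 + 2 * t) := by
  rw [norm_smul, gaussKernel, norm_mul, Real.norm_of_nonneg (exp_pos _).le, Real.norm_eq_abs,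
    mul_assoc, mul_comm (exp _)]
  exact mul_le_mul_of_nonneg_left (mul_exp_neg_inv_mul_sq_le ht _) (abs_nonneg c)

lemma hasGradientAt_gaussKernel [InnerProductSpace ℝ E] [CompleteSpace E] (c t : ℝ) (x z : E) :
    HasGradientAt (gaussKernel c t x) (-t⁻¹ • gaussKernel c t x z • (z - x)) z := by
  rw [hasGradientAt_iff_hasFDerivAt]
  have h := ((((hasFDerivAt_id z).sub_const x).norm_sq.const_mul (-(2 * t)⁻¹)).exp).const_mul c
  refine h.congr_fderiv ?_
  ext w
  simp only [gaussKernel, toDual_apply_apply, smul_apply, ContinuousLinearMap.comp_id,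
    coe_innerSL_apply, real_inner_smul_left, nsmul_eq_mul, Nat.cast_ofNat, smul_eq_mul, id_eq]
  ring

variable [MeasurableSpace E] [BorelSpace E] {μ : Measure E} [IsFiniteMeasure μ]

lemma integrable_gaussKernel (c : ℝ) {t : ℝ} (ht : 0 < t) (z : E) :
    Integrable (gaussKernel c t · z) μ :=
  .of_bound (continuous_gaussKernel c t z).aestronglyMeasurable |c|
    (ae_of_all _ fun x => abs_gaussKernel_le c ht x z)

lemma integrable_gaussKernel_smul_sub [NormedSpace ℝ E] [SecondCountableTopology E]
    (c : ℝ) {t : ℝ} (ht : 0 < t) (z : E) :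
    Integrable (fun x => gaussKernel c t x z • (z - x)) μ :=
  .of_bound
    ((continuous_gaussKernel c t z).smul (continuous_const.sub continuous_id)).aestronglyMeasurable
    _ (ae_of_all _ fun x => norm_gaussKernel_smul_sub_le c ht x z)

lemma integral_gaussKernel_pos [NeZero μ] {c : ℝ} (hc : 0 < c) {t : ℝ} (ht : 0 < t) (z : E) :
    0 < ∫ x, gaussKernel c t x z ∂μ := by
  rw [integral_pos_iff_support_of_nonneg (fun x => (gaussKernel_pos hc t x z).le)
    (integrable_gaussKernel c ht z),
    Function.support_eq_univ fun x => (gaussKernel_pos hc t x z).ne']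
  exact Measure.measure_univ_pos.2 (NeZero.ne μ)

variable [InnerProductSpace ℝ E] [CompleteSpace E] [SecondCountableTopology E]

lemma hasGradientAt_integral_gaussKernel (c : ℝ) {t : ℝ} (ht : 0 < t) (y : E) :
    HasGradientAt (fun z => ∫ x, gaussKernel c t x z ∂μ)
      (-t⁻¹ • ∫ x, gaussKernel c t x y • (y - x) ∂μ) y := by
  have h := hasFDerivAt_integral_of_dominated_of_fderiv_le (μ := μ) (x₀ := y)
    (F' := fun z x => toDual ℝ E (-t⁻¹ • gaussKernel c t x z • (z - x)))
    (bound := fun _ => t⁻¹ * (|c| * (1 + 2 * t))) Filter.univ_mem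
    (.of_forall fun z => (integrable_gaussKernel c ht z).aestronglyMeasurable)
    (integrable_gaussKernel c ht y)
    ((toDual ℝ E).continuous.comp_aestronglyMeasurable
      ((integrable_gaussKernel_smul_sub c ht y).aestronglyMeasurable.const_smul _))
    (ae_of_all _ fun x z _ => by
      rw [LinearIsometryEquiv.norm_map, norm_smul, norm_neg, norm_inv, Real.norm_of_nonneg ht.le]
      exact mul_le_mul_of_nonneg_left (norm_gaussKernel_smul_sub_le c ht x z) (by positivity))
    (integrable_const _)
    (ae_of_all _ fun x z _ => (hasGradientAt_gaussKernel c t x z).hasFDerivAt)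
  have hcomm := (toDual ℝ E).toLinearIsometry.integral_comp_comm (μ := μ)
    fun x => -t⁻¹ • gaussKernel c t x y • (y - x)
  simp only [LinearIsometryEquiv.coe_toLinearIsometry, integral_smul] at hcomm
  rwa [hcomm] at h

theorem integral_gaussKernel_smul_eq [NeZero μ] {c : ℝ} (hc : 0 < c) {t : ℝ} (ht : 0 < t)
    (y : E) :
    ∫ x, gaussKernel c t x y • x ∂μ = (∫ x, gaussKernel c t x y ∂μ) •
      (y + t • gradient (fun z => log (∫ x, gaussKernel c t x z ∂μ)) y) := by
  set p := ∫ x, gaussKernel c t x y ∂μ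
  set G := ∫ x, gaussKernel c t x y • (y - x) ∂μ
  have hp : p ≠ 0 := (integral_gaussKernel_pos hc ht y).ne'
  have hgrad : gradient (fun z => log (∫ x, gaussKernel c t x z ∂μ)) y = p⁻¹ • -t⁻¹ • G :=
    ((hasGradientAt_integral_gaussKernel c ht y).log hp).gradient
  have hfirst : ∫ x, gaussKernel c t x y • x ∂μ = p • y - G := by
    rw [← integral_smul_const, ← integral_sub ((integrable_gaussKernel c ht y).smul_const y)
      (integrable_gaussKernel_smul_sub c ht y)]
    simp only [smul_sub, sub_sub_cancel]
  rw [hfirst, hgrad]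
  match_scalars <;> field_simp

end Tweedie

open Tweedie

lemma gaussE_smul_one {d : ℕ} {t : ℝ} (ht : 0 < t) (x z : EuclideanSpace ℝ (Fin d)) :
    gaussE x (t • 1) z = gaussKernel (((2 * π) ^ d * t ^ d) ^ (-(1 : ℝ) / 2)) t x z := by
  have hinv : (t • (1 : Matrix (Fin d) (Fin d) ℝ))⁻¹ = t⁻¹ • 1 :=
    Matrix.inv_eq_right_inv <| by
      rw [smul_mul_smul_comm, mul_inv_cancel₀ ht.ne', one_mul, one_smul]
  have hnorm : dotProduct (fun i => z i - x i) (fun i => z i - x i) = ‖z - x‖ ^ 2 := by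
    rw [EuclideanSpace.norm_sq_eq]
    simp [dotProduct, sq]
  rw [gaussE, gaussKernel, Matrix.det_smul, Matrix.det_one, mul_one, Fintype.card_fin, hinv,
    Matrix.smul_mulVec, Matrix.one_mulVec, dotProduct_smul, hnorm, smul_eq_mul]
  congr 2
  ring

theorem tweedie_general {d : ℕ} (μ : Measure (EuclideanSpace ℝ (Fin d))) [IsProbabilityMeasure μ]
    (t : ℝ) (ht : 0 < t) (y : EuclideanSpace ℝ (Fin d)) :
    (∫ x, gaussE x (t • 1) y • x ∂μ) =
      (∫ x, gaussE x (t • 1) y ∂μ) •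
        (y + t • gradient (fun z => Real.log (∫ x, gaussE x (t • 1) z ∂μ)) y) := by
  simp only [gaussE_smul_one ht]
  exact integral_gaussKernel_smul_eq (by positivity) ht y

/-- Tweedie's identity: if `Y = X + √t·N` with `N ∼ N(0,Id)` independent of `X ∼ μ`, so that
`Y` has density `p_t(y) = ∫ G(x, t·Id)(y) dμ(x)`, then the posterior mean satisfies
`E[X | Y = y] = y + t·∇ log p_t(y)`, i.e. (multiplying by `p_t(y)`)
`∫ G(x,t·Id)(y) x dμ(x) = p_t(y) (y + t ∇ log p_t(y))`. -/
theorem tweedie {d : ℕ} (μ : Measure (EuclideanSpace ℝ (Fin d))) [IsProbabilityMeasure μ]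
    (hcs : ∃ K : Set (EuclideanSpace ℝ (Fin d)), IsCompact K ∧ μ Kᶜ = 0)
    (t : ℝ) (ht : 0 < t) (y : EuclideanSpace ℝ (Fin d)) :
    (∫ x, gaussE x (t • 1) y • x ∂μ) =
      (∫ x, gaussE x (t • 1) y ∂μ) •
        (y + t • gradient (fun z => Real.log (∫ x, gaussE x (t • 1) z ∂μ)) y) :=
  tweedie_general μ t ht y
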